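/- Let D+ be a canonical positive Boolean automaton double-cycle with left cycle of size n and right cycle of size m (f_c(x) = x^ℓ_{n-1} ∧ x^r_{m-1}, all other automata copy their predecessor). For any configuration x containing at least one automaton at state 0, there exists a sequence of at most 2n+m-3 asynchronous single-automaton updates transforming x into the all-zeros configuration (0^n, 0^m). -/

import Mathlib

/-- A configuration of a Boolean automaton double-cycle with cycles of sizes `n`
and `m`: the shared automaton `c` is index 0 of both cycles (so valid
configurations satisfy `x.1 0 = x.2 0`). -/
abbrev Cfg (n m : ℕ) := (Fin n → Bool) × (Fin m → Bool)

/-- One asynchronous single-automaton update in a double-cycle whose shared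
automaton `c` computes `fc`; every non-shared automaton copies its predecessor. -/
inductive Step {n m : ℕ} (fc : Cfg n m → Bool) : Cfg n m → Cfg n m → Prop
  | left (x : Cfg n m) (i : Fin n) (hi : 1 ≤ i.val) :
      Step fc x (Function.update x.1 i (x.1 ⟨i.val - 1, by have := i.isLt; omega⟩), x.2)
  | right (x : Cfg n m) (j : Fin m) (hj : 1 ≤ j.val) :
      Step fc x (x.1, Function.update x.2 j (x.2 ⟨j.val - 1, by have := j.isLt; omega⟩))
  | center (x : Cfg n m) (i : Fin n) (j : Fin m) (hi : i.val = 0) (hj : j.val = 0) :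
      Step fc x (Function.update x.1 i (fc x), Function.update x.2 j (fc x))

/-- `Steps fc k x y`: configuration `y` is obtained from `x` by exactly `k`
asynchronous single-automaton updates. -/
def Steps {n m : ℕ} (fc : Cfg n m → Bool) : ℕ → Cfg n m → Cfg n m → Prop
  | 0, x, y => x = y
  | k + 1, x, y => ∃ z, Step fc x z ∧ Steps fc k z y


/-!
A `0` travels forward along a cycle one cell per update, since every non-shared automaton
copies its predecessor. Move a `0` to the last cell of its cycle; then `c`, computing an `∧`,
can be switched to `0`, and from `c` the `0` is swept once around the left cycle and over the
part of the right cycle that is not already `0`. A `0` at cell `i ≥ 1` of the left cycle costs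
`(n - 1 - i) + 1 + (n - 1) + (m - 1) ≤ 2n + m - 3` updates; one at cell `j ≥ 1` of the right
cycle costs `(m - 1 - j) + 1 + (n - 1) + (j - 1) = n + m - 2`; if `c` is already `0`, the two
sweeps alone cost `n + m - 2`.
-/

variable {n m : ℕ} {fc : Cfg n m → Bool}

theorem Steps.single {x y : Cfg n m} (h : Step fc x y) : Steps fc 1 x y :=
  ⟨y, h, rfl⟩

theorem Steps.trans {k l : ℕ} {x y z : Cfg n m} (hxy : Steps fc k x y) (hyz : Steps fc l y z) :
    Steps fc (k + l) x z := by
  induction k generalizing x with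
  | zero => cases hxy; simpa using hyz
  | succ k ih =>
    obtain ⟨w, hxw, hwy⟩ := hxy
    rw [Nat.add_right_comm]
    exact ⟨w, hxw, ih hwy⟩

/-- `emb` places a cycle of length `p` inside the double-cycle, with copy updates along it. -/
theorem Steps.propagate_false {p : ℕ} (emb : (Fin p → Bool) → Cfg n m)
    (hcopy : ∀ (v : Fin p → Bool) (i : Fin p) (hi : 1 ≤ i.val),
      Step fc (emb v) (emb (Function.update v i (v ⟨i.val - 1, by omega⟩))))
    (v : Fin p → Bool) {a k : ℕ} (hak : a + k < p) (ha : v ⟨a, by omega⟩ = false) :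
    Steps fc k (emb v) (emb fun i => if a ≤ i.val ∧ i.val ≤ a + k then false else v i) := by
  induction k with
  | zero =>
    show emb v = emb _
    congr 1
    funext i
    split_ifs with hi
    · obtain rfl : i = ⟨a, by omega⟩ := Fin.ext (show i.val = a by omega)
      exact ha
    · rfl
  | succ k ih =>
    refine (ih (by omega) ha).trans (Steps.single ?_)
    convert hcopy _ ⟨a + k + 1, hak⟩ (by simp) using 2
    funext i
    simp only [Function.update_apply, Fin.ext_iff]
    split_ifs <;> first | rfl | omega

theorem Steps.propagate_false_left (w : Fin m → Bool) (v : Fin n → Bool) {a k : ℕ}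
    (hak : a + k < n) (ha : v ⟨a, by omega⟩ = false) :
    Steps fc k (v, w) (fun i => if a ≤ i.val ∧ i.val ≤ a + k then false else v i, w) :=
  Steps.propagate_false (fun v => (v, w)) (fun v i hi => Step.left (v, w) i hi) v hak ha

theorem Steps.propagate_false_right (v : Fin n → Bool) (w : Fin m → Bool) {a k : ℕ}
    (hak : a + k < m) (ha : w ⟨a, by omega⟩ = false) :
    Steps fc k (v, w) (v, fun j => if a ≤ j.val ∧ j.val ≤ a + k then false else w j) :=
  Steps.propagate_false (fun w => (v, w)) (fun w j hj => Step.right (v, w) j hj) w hak ha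

theorem steps_allFalse_of_shared_false (hn : 0 < n) (hm : 0 < m) {y : Cfg n m} {k : ℕ}
    (hk : k < m) (hy₁ : y.1 ⟨0, hn⟩ = false) (hy₂ : y.2 ⟨0, hm⟩ = false)
    (htail : ∀ j : Fin m, k < j.val → y.2 j = false) :
    Steps fc (n - 1 + k) y (fun _ => false, fun _ => false) := by
  have hleft : Steps fc (n - 1) y (fun _ => false, y.2) := by
    convert Steps.propagate_false_left y.2 y.1 (a := 0) (k := n - 1) (by omega) hy₁ using 2
    funext i
    rw [if_pos (by omega)]
  have hright : Steps fc k (fun _ => false, y.2) (fun _ => false, fun _ => false) := by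
    convert Steps.propagate_false_right _ y.2 (a := 0) (k := k) (by omega) hy₂ using 2
    funext j
    split_ifs with hj
    · rfl
    · exact (htail j (by omega)).symm
  exact hleft.trans hright

theorem steps_allFalse_of_center_false (hn : 0 < n) (hm : 0 < m) {y : Cfg n m} {k : ℕ}
    (hk : k < m) (hfc : fc y = false) (htail : ∀ j : Fin m, k < j.val → y.2 j = false) :
    Steps fc (1 + (n - 1 + k)) y (fun _ => false, fun _ => false) := by
  have hcenter := Step.center (fc := fc) y ⟨0, hn⟩ ⟨0, hm⟩ rfl rfl
  rw [hfc] at hcenter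
  refine (Steps.single hcenter).trans (steps_allFalse_of_shared_false hn hm hk ?_ ?_ ?_)
  · exact Function.update_self (⟨0, hn⟩ : Fin n) false y.1
  · exact Function.update_self (⟨0, hm⟩ : Fin m) false y.2
  · intro j hj
    show Function.update y.2 ⟨0, hm⟩ false j = false
    rw [Function.update_of_ne (fun h => by simp [h] at hj)]
    exact htail j hj

theorem stmt7 (n m : ℕ) (hn : 0 < n) (hm : 0 < m) (x : Cfg n m)
    (hshare : x.1 ⟨0, hn⟩ = x.2 ⟨0, hm⟩)
    (hzero : (∃ i, x.1 i = false) ∨ (∃ j, x.2 j = false)) :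
    ∃ k ≤ 2 * n + m - 3,
      Steps (fun y : Cfg n m => y.1 ⟨n - 1, by omega⟩ && y.2 ⟨m - 1, by omega⟩)
        k x ((fun _ => false, fun _ => false) : Cfg n m) := by
  by_cases hc : x.1 ⟨0, hn⟩ = false
  · exact ⟨n - 1 + (m - 1), by omega, steps_allFalse_of_shared_false hn hm (by omega) hc
      (hshare ▸ hc) fun j hj => absurd j.isLt (by omega)⟩
  rcases hzero with ⟨i, hi⟩ | ⟨j, hj⟩
  · have hi0 : 0 < i.val := by
      by_contra! h
      obtain rfl : i = ⟨0, hn⟩ := Fin.ext (show i.val = 0 by omega)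
      exact hc hi
    refine ⟨n - 1 - i + (1 + (n - 1 + (m - 1))), by omega,
      (Steps.propagate_false_left x.2 x.1 (a := i) (k := n - 1 - i) (by omega) hi).trans
        (steps_allFalse_of_center_false hn hm (by omega) ?_ fun j hj => absurd j.isLt (by omega))⟩
    exact Bool.and_eq_false_iff.2 (.inl (if_pos ⟨by simp; omega, by simp; omega⟩))
  · have hj0 : 0 < j.val := by
      by_contra! h
      obtain rfl : j = ⟨0, hm⟩ := Fin.ext (show j.val = 0 by omega)
      exact hc (hshare ▸ hj)
    refine ⟨m - 1 - j + (1 + (n - 1 + (j - 1))), by omega,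
      (Steps.propagate_false_right x.1 x.2 (a := j) (k := m - 1 - j) (by omega) hj).trans
        (steps_allFalse_of_center_false hn hm (by omega) ?_ fun j' hj' => ?_)⟩
    · exact Bool.and_eq_false_iff.2 (.inr (if_pos ⟨by simp; omega, by simp; omega⟩))
    · exact if_pos ⟨by omega, by omega⟩
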